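/- Singularity of the Okamoto–Wunsch functions (Example 2.1 (iii)): Let 0 < a < b < 1, m = 3, f_0(x) = a x, f_1(x) = a + (b − a) x, f_2(x) = (1 − b) x + b on X = [0,1], and let G = f_{a,b} be the unique continuous solution of de Rham's equation. Then α = −log_3(a(b − a)(1 − b))/3, α > 1 if and only if (a,b) ≠ (1/3,2/3), and consequently for (a,b) ≠ (1/3,2/3) the function f_{a,b} satisfies f_{a,b}′(t) = 0 for Lebesgue-a.e. t ∈ (0,1); in particular f_{a,b} is a singular function. -/

import Mathlib

/-!
Write `p₀ = a`, `p₁ = b - a`, `p₂ = 1 - b` for the slopes of the `fᵢ`. By de Rham's equation the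
graph of `G` over each `3`-adic interval `[k/3ⁿ, (k+1)/3ⁿ]` is an affine copy of the whole graph,
of height the product of the `p_d` over the digits `d` of `k`. These heights are positive and `G`
maps `[0,1]` into itself, so `G` is strictly increasing, hence differentiable almost everywhere by
Lebesgue's theorem. At a point `t` whose digits are not eventually constant, `3ⁿ` times the height
over the level-`n` interval containing `t` tends to `G'(t)`, and going from level `n` to `n + 1`
multiplies it by `3 p_d` with `d` the `(n+1)`-st digit of `t`. If `G'(t) ≠ 0` this forces
`3 p_d = 1` for all late digits; unless `p₀ = p₁ = p₂ = 1/3`, only one digit has this weight, so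
the digits of `t` would be eventually constant. The value of `α` is the integral of a step
function, and `α > 1` is the AM-GM inequality for `p₀, p₁, p₂`.
-/

open MeasureTheory Filter Set Topology

noncomputable section

/-- The first digit `A₁(t) = ⌊m t⌋` of the `m`-adic expansion of `t ∈ [0,1)`. -/
def A1 (m : ℕ) (t : ℝ) : ℕ := (⌊(m : ℝ) * t⌋).toNat

/-- The shift map `Ht = m t - ⌊m t⌋` on `[0,1)`. -/
def Hmap (m : ℕ) (t : ℝ) : ℝ := (m : ℝ) * t - ⌊(m : ℝ) * t⌋

/-- The maps `f₀(x) = ax`, `f₁(x) = a + (b-a)x`, `f₂(x) = (1-b)x + b` of Example 2.1 (iii). -/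
def fOW (a b : ℝ) : ℕ → ℝ → ℝ := fun i x =>
  if i = 0 then a * x else if i = 1 then a + (b - a) * x else (1 - b) * x + b

/-- `α = ∫₀¹ -log₃ |f'_{A₁(t)}(G(Ht))| dt` for the Okamoto–Wunsch system. -/
def alphaOW (a b : ℝ) (G : ℝ → ℝ) : ℝ :=
  ∫ t in Set.Ico (0 : ℝ) 1, -Real.logb 3 |deriv (fOW a b (A1 3 t)) (G (Hmap 3 t))|

end

-- (x + y + z)³ - 27xyz = ∑_cyc (x + y + 7z)(x - y)² / 2
theorem mul_mul_lt_cube_of_not_eq {x y z : ℝ} (hx : 0 ≤ x) (hy : 0 ≤ y) (hz : 0 ≤ z)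
    (hne : ¬(x = y ∧ y = z)) : x * y * z < ((x + y + z) / 3) ^ 3 := by
  have hxy := mul_nonneg (by positivity : 0 ≤ x + y + 7 * z) (sq_nonneg (x - y))
  have hyz := mul_nonneg (by positivity : 0 ≤ y + z + 7 * x) (sq_nonneg (y - z))
  have hzx := mul_nonneg (by positivity : 0 ≤ z + x + 7 * y) (sq_nonneg (z - x))
  rcases not_and_or.1 hne with h | h
  · have : 0 < x + y + 7 * z := by rcases lt_or_gt_of_ne h with h | h <;> linarith
    nlinarith [mul_pos this (sq_pos_iff.2 (sub_ne_zero.2 h))]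
  · have : 0 < y + z + 7 * x := by rcases lt_or_gt_of_ne h with h | h <;> linarith
    nlinarith [mul_pos this (sq_pos_iff.2 (sub_ne_zero.2 h))]

theorem integral_Ico_comp_natFloor {m : ℕ} (hm : 0 < m) (φ : ℕ → ℝ) :
    ∫ t in Ico (0 : ℝ) 1, φ ⌊m * t⌋₊ = (∑ i ∈ Finset.range m, φ i) / m := by
  have hm' : (0 : ℝ) < m := Nat.cast_pos.2 hm
  set s : ℕ → Set ℝ := fun i => Ico (i / m : ℝ) ((i + 1) / m)
  have hfloor : ∀ i, ∀ t ∈ s i, ⌊m * t⌋₊ = i := fun i t ⟨h0, h1⟩ => by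
    rw [div_le_iff₀ hm'] at h0
    rw [lt_div_iff₀ hm'] at h1
    rw [Nat.floor_eq_iff (by linarith [(Nat.cast_nonneg i : (0 : ℝ) ≤ i)])]
    constructor <;> linarith
  have hunion : Ico (0 : ℝ) 1 = ⋃ i ∈ Finset.range m, s i := by
    ext t
    simp only [mem_Ico, Finset.mem_range, mem_iUnion, s, exists_prop, div_le_iff₀ hm',
      lt_div_iff₀ hm']
    constructor
    · rintro ⟨h0, h1⟩
      refine ⟨⌊m * t⌋₊, (Nat.floor_lt (by positivity)).2 (by nlinarith), ?_, ?_⟩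
      · linarith [Nat.floor_le (by positivity : 0 ≤ (m : ℝ) * t)]
      · linarith [Nat.lt_floor_add_one ((m : ℝ) * t)]
    · rintro ⟨i, hi, h0, h1⟩
      have : (i : ℝ) + 1 ≤ m := by exact_mod_cast hi
      constructor <;> nlinarith [(Nat.cast_nonneg i : (0 : ℝ) ≤ i)]
  have hdisj : Set.PairwiseDisjoint ↑(Finset.range m) s := fun i _ j _ hij =>
    Set.disjoint_left.2 fun t hi hj => hij ((hfloor i t hi).symm.trans (hfloor j t hj))
  have hconst : ∀ i, EqOn (fun t : ℝ => φ ⌊m * t⌋₊) (fun _ => φ i) (s i) := fun i t ht =>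
    congrArg φ (hfloor i t ht)
  rw [hunion, integral_biUnion_finset _ (fun i _ => measurableSet_Ico) hdisj, Finset.sum_div]
  · refine Finset.sum_congr rfl fun i _ => ?_
    rw [setIntegral_congr_fun measurableSet_Ico (hconst i), setIntegral_const, measureReal_def,
      Real.volume_Ico, ENNReal.toReal_ofReal (by rw [sub_nonneg]; gcongr; linarith), smul_eq_mul]
    field_simp
    ring
  · intro i _
    rw [integrableOn_congr_fun (hconst i) measurableSet_Ico]
    exact integrableOn_const (by simp [s, Real.volume_Ico])

theorem Filter.Tendsto.eventually_eq_of_finite {α ι : Type*} [TopologicalSpace α] [T1Space α]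
    {L : Filter ι} {u : ι → α} {a : α} {s : Set α} (hu : Tendsto u L (𝓝 a)) (hs : s.Finite)
    (hus : ∀ i, u i ∈ s) : ∀ᶠ i in L, u i = a := by
  have : (s \ {a})ᶜ ∈ 𝓝 a := hs.sdiff.isClosed.isOpen_compl.mem_nhds fun h => h.2 rfl
  filter_upwards [hu this] with i hi
  by_contra hne
  exact hi ⟨hus i, hne⟩

theorem eq_zero_of_forall_abs_pow_mul_le {r C x : ℝ} (hr : 1 < r) (h : ∀ j : ℕ, |r ^ j * x| ≤ C) :
    x = 0 := by
  by_contra hx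
  have hx' := abs_pos.2 hx
  obtain ⟨j, hj⟩ := pow_unbounded_of_one_lt (C / |x|) hr
  have := h j
  rw [abs_mul, abs_of_pos (pow_pos (zero_lt_one.trans hr) j)] at this
  rw [div_lt_iff₀ hx'] at hj
  linarith

theorem HasDerivAt.tendsto_slope_of_lt_of_lt {f : ℝ → ℝ} {c x : ℝ} (hf : HasDerivAt f c x)
    {ι : Type*} {L : Filter ι} {u v : ι → ℝ} (hu : Tendsto u L (𝓝 x)) (hv : Tendsto v L (𝓝 x))
    (hux : ∀ i, u i < x) (hxv : ∀ i, x < v i) :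
    Tendsto (fun i => slope f (u i) (v i)) L (𝓝 c) := by
  have hslope := hasDerivAt_iff_tendsto_slope.1 hf
  have hl : Tendsto (fun i => slope f (u i) x) L (𝓝 c) := by
    simp_rw [slope_comm f _ x]
    exact hslope.comp (tendsto_nhdsWithin_iff.2 ⟨hu, .of_forall fun i => (hux i).ne⟩)
  have hr : Tendsto (fun i => slope f x (v i)) L (𝓝 c) :=
    hslope.comp (tendsto_nhdsWithin_iff.2 ⟨hv, .of_forall fun i => (hxv i).ne'⟩)
  have hmem : ∀ i, slope f (u i) (v i) ∈ uIcc (slope f (u i) x) (slope f x (v i)) := fun i => by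
    have huv := (hux i).trans (hxv i)
    rw [← lineMap_slope_slope_sub_div_sub f (u i) x (v i) huv.ne, ← segment_eq_uIcc]
    refine lineMap_mem_segment ℝ _ _ ⟨div_nonneg ?_ ?_, (div_le_one ?_).2 ?_⟩ <;>
      linarith [hux i, hxv i]
  refine tendsto_of_tendsto_of_tendsto_of_le_of_le ?_ ?_ (fun i => (hmem i).1) (fun i => (hmem i).2)
  · simpa using hl.min hr
  · simpa using hl.max hr

theorem Nat.exists_eq_mul_add_of_lt_pow_succ {m n k : ℕ} (hm : 0 < m) (hk : k < m ^ (n + 1)) :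
    ∃ q j, q < m ^ n ∧ j < m ∧ k = m * q + j :=
  ⟨k / m, k % m, Nat.div_lt_of_lt_mul (by rwa [← pow_succ']), Nat.mod_lt k hm,
    (Nat.div_add_mod k m).symm⟩

theorem adic_succ_add_eq {m : ℕ} (hm : 0 < m) (n q j : ℕ) (y : ℝ) :
    ((m * q + j : ℕ) + y) / (m : ℝ) ^ (n + 1) = (q + (j + y) / m) / (m : ℝ) ^ n := by
  have : (m : ℝ) ≠ 0 := by positivity
  push_cast
  field_simp
  ring

theorem digit_add_div_mem_Icc {m i : ℕ} (hi : i < m) {y : ℝ} (hy : y ∈ Icc (0 : ℝ) 1) :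
    (i + y) / m ∈ Icc (0 : ℝ) 1 := by
  have hm : (0 : ℝ) < m := by exact_mod_cast Nat.zero_lt_of_lt hi
  have : (i : ℝ) + 1 ≤ m := by exact_mod_cast hi
  constructor
  · have := hy.1; positivity
  · rw [div_le_one hm]; linarith [hy.2]

theorem exists_eq_adic_add {m : ℕ} (hm : 0 < m) (n : ℕ) {x : ℝ} (hx : x ∈ Icc (0 : ℝ) 1) :
    ∃ k < m ^ n, ∃ y ∈ Icc (0 : ℝ) 1, x = (k + y) / m ^ n := by
  have hpow : (0 : ℝ) < m ^ n := by positivity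
  rcases hx.2.lt_or_eq with hx1 | rfl
  · have hxm : 0 ≤ x * m ^ n := mul_nonneg hx.1 hpow.le
    refine ⟨⌊x * m ^ n⌋₊, (Nat.floor_lt hxm).2 (by push_cast; nlinarith), x * m ^ n - ⌊x * m ^ n⌋₊,
      ⟨by linarith [Nat.floor_le hxm], by linarith [Nat.lt_floor_add_one (x * m ^ n)]⟩, ?_⟩
    field_simp
    ring
  · refine ⟨m ^ n - 1, Nat.sub_lt (by positivity) one_pos, 1, ⟨zero_le_one, le_rfl⟩, ?_⟩
    rw [Nat.cast_sub (Nat.one_le_pow _ _ hm)]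
    push_cast
    field_simp
    ring

theorem exists_natFloor_mul_pow_succ_eq {m : ℕ} (hm : 0 < m) {x : ℝ} (hx : 0 ≤ x) (n : ℕ) :
    ∃ j < m, ⌊x * m ^ (n + 1)⌋₊ = m * ⌊x * m ^ n⌋₊ + j := by
  have hxn : 0 ≤ x * m ^ n := by positivity
  have heq : x * m ^ (n + 1) = m * (x * m ^ n) := by ring
  have hle : m * ⌊x * m ^ n⌋₊ ≤ ⌊x * m ^ (n + 1)⌋₊ := Nat.le_floor (by
    rw [heq]; push_cast; exact mul_le_mul_of_nonneg_left (Nat.floor_le hxn) (Nat.cast_nonneg m))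
  have hlt : ⌊x * m ^ (n + 1)⌋₊ < m * ⌊x * m ^ n⌋₊ + m := (Nat.floor_lt (by positivity)).2 (by
    rw [heq]; push_cast
    nlinarith [Nat.lt_floor_add_one (x * m ^ n), (Nat.cast_pos.2 hm : (0 : ℝ) < m)])
  exact ⟨_, by omega, (Nat.add_sub_of_le hle).symm⟩

-- If the `m`-adic digits of `x ≥ 0` are eventually all equal to `i`, their tail sums to
-- `i / (m - 1)`, so `x` is one of these points.
def eventuallyConstDigits (m : ℕ) : Set ℝ :=
  range fun q : ℕ × ℕ => (q.1 : ℝ) / ((m - 1) * m ^ q.2)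

theorem mem_eventuallyConstDigits_of_mul_eq {m n k : ℕ} (hm : 1 < m) {x : ℝ}
    (h : (m - 1) * m ^ n * x = k) : x ∈ eventuallyConstDigits m := by
  have : (0 : ℝ) < m - 1 := by
    rw [sub_pos]; exact_mod_cast hm
  refine ⟨(k, n), ?_⟩
  dsimp only
  rw [div_eq_iff (by positivity), ← h]
  ring

theorem natFloor_mul_pow_lt_of_notMem {m : ℕ} (hm : 1 < m) {x : ℝ} (hx : 0 ≤ x)
    (hxC : x ∉ eventuallyConstDigits m) (n : ℕ) : (⌊x * m ^ n⌋₊ : ℝ) < x * m ^ n := by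
  refine (Nat.floor_le (by positivity)).lt_of_ne fun h => hxC ?_
  refine mem_eventuallyConstDigits_of_mul_eq (n := n) (k := (m - 1) * ⌊x * m ^ n⌋₊) hm ?_
  rw [Nat.cast_mul, Nat.cast_sub hm.le, h]
  push_cast
  ring

theorem mem_eventuallyConstDigits_of_digit_eq {m : ℕ} (hm : 1 < m) {x : ℝ} (hx : 0 ≤ x) {N i : ℕ}
    (h : ∀ n ≥ N, ⌊x * m ^ (n + 1)⌋₊ = m * ⌊x * m ^ n⌋₊ + i) : x ∈ eventuallyConstDigits m := by
  have hm' : (1 : ℝ) < m := by exact_mod_cast hm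
  set e : ℕ → ℝ := fun n => (m - 1) * (x * m ^ n - ⌊x * m ^ n⌋₊) - i
  have he_bdd : ∀ n, |e n| ≤ m - 1 + i := fun n => by
    have h0 := Nat.floor_le (by positivity : 0 ≤ x * m ^ n)
    have h1 := Nat.lt_floor_add_one (x * m ^ n)
    rw [abs_le]
    constructor <;> nlinarith [(Nat.cast_nonneg i : (0 : ℝ) ≤ i)]
  have he_succ : ∀ n ≥ N, e (n + 1) = m * e n := fun n hn => by
    simp only [e, h n hn]
    push_cast
    ring
  have he_pow : ∀ j, e (N + j) = m ^ j * e N := fun j => by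
    induction j with
    | zero => simp
    | succ j ih => rw [← add_assoc, he_succ _ (by omega), ih]; ring
  have he : e N = 0 := eq_zero_of_forall_abs_pow_mul_le hm' fun j => he_pow j ▸ he_bdd (N + j)
  refine mem_eventuallyConstDigits_of_mul_eq (n := N) (k := (m - 1) * ⌊x * m ^ N⌋₊ + i) hm ?_
  simp only [e] at he
  rw [Nat.cast_add, Nat.cast_mul, Nat.cast_sub hm.le]
  push_cast
  linarith

theorem HasDerivAt.tendsto_slope_adic {f : ℝ → ℝ} {c x : ℝ} (hf : HasDerivAt f c x) {m : ℕ}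
    (hm : 1 < m) (hx : 0 ≤ x) (hxC : x ∉ eventuallyConstDigits m) :
    Tendsto (fun n : ℕ => slope f (⌊x * m ^ n⌋₊ / m ^ n) ((⌊x * m ^ n⌋₊ + 1) / m ^ n)) atTop
      (𝓝 c) := by
  have hpow : ∀ n : ℕ, (0 : ℝ) < m ^ n := fun n => by positivity
  have hlt := natFloor_mul_pow_lt_of_notMem hm hx hxC
  have hgt : ∀ n : ℕ, x * m ^ n < ⌊x * m ^ n⌋₊ + 1 := fun n => Nat.lt_floor_add_one _
  have hinv : Tendsto (fun n : ℕ => ((m : ℝ) ^ n)⁻¹) atTop (𝓝 0) :=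
    tendsto_inv_atTop_zero.comp (tendsto_pow_atTop_atTop_of_one_lt (by exact_mod_cast hm))
  have hlt' : ∀ n : ℕ, (⌊x * m ^ n⌋₊ : ℝ) / m ^ n < x := fun n => by
    rw [div_lt_iff₀ (hpow n)]; exact hlt n
  have hgt' : ∀ n : ℕ, x < (⌊x * m ^ n⌋₊ + 1) / m ^ n := fun n => by
    rw [lt_div_iff₀ (hpow n)]; exact hgt n
  have hwidth : ∀ n : ℕ, (⌊x * m ^ n⌋₊ + 1) / m ^ n - ⌊x * m ^ n⌋₊ / m ^ n = ((m : ℝ) ^ n)⁻¹ :=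
    fun n => by field_simp; ring
  have hlo : Tendsto (fun n : ℕ => x - ((m : ℝ) ^ n)⁻¹) atTop (𝓝 x) := by
    simpa using tendsto_const_nhds.sub hinv
  have hhi : Tendsto (fun n : ℕ => x + ((m : ℝ) ^ n)⁻¹) atTop (𝓝 x) := by
    simpa using tendsto_const_nhds.add hinv
  refine hf.tendsto_slope_of_lt_of_lt ?_ ?_ hlt' hgt'
  · refine tendsto_of_tendsto_of_tendsto_of_le_of_le hlo tendsto_const_nhds (fun n => ?_)
      (fun n => (hlt' n).le)
    linarith [hwidth n, hgt' n]
  · refine tendsto_of_tendsto_of_tendsto_of_le_of_le tendsto_const_nhds hhi (fun n => (hgt' n).le)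
      (fun n => ?_)
    linarith [hwidth n, hlt' n]

structure IsSelfAffine (m : ℕ) (p : ℕ → ℝ) (G : ℝ → ℝ) : Prop where
  map_zero : G 0 = 0
  map_one : G 1 = 1
  map_digit_add : ∀ i < m, ∀ y ∈ Icc (0 : ℝ) 1, G ((i + y) / m) = G (i / m) + p i * G y

noncomputable def adicIncr (G : ℝ → ℝ) (m n k : ℕ) : ℝ := G ((k + 1) / m ^ n) - G (k / m ^ n)

theorem slope_adic (G : ℝ → ℝ) {m : ℕ} (hm : 0 < m) (n k : ℕ) :
    slope G (k / m ^ n) ((k + 1) / m ^ n) = m ^ n * adicIncr G m n k := by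
  have : (m : ℝ) ^ n ≠ 0 := by positivity
  rw [slope_def_field, adicIncr]
  field_simp
  ring

namespace IsSelfAffine

variable {m : ℕ} {p : ℕ → ℝ} {G : ℝ → ℝ}

theorem map_succ_adic_add (hG : IsSelfAffine m p G) (hm : 0 < m) {n q j : ℕ} (hj : j < m)
    (hq : ∀ y ∈ Icc (0 : ℝ) 1, G ((q + y) / m ^ n) = G (q / m ^ n) + adicIncr G m n q * G y)
    {z : ℝ} (hz : z ∈ Icc (0 : ℝ) 1) :
    G (((m * q + j : ℕ) + z) / m ^ (n + 1)) =
      G (q / m ^ n) + adicIncr G m n q * (G (j / m) + p j * G z) := by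
  rw [adic_succ_add_eq hm, hq _ (digit_add_div_mem_Icc hj hz), hG.map_digit_add j hj z hz]

theorem map_adic_add (hG : IsSelfAffine m p G) (hm : 0 < m) (n : ℕ) {k : ℕ} (hk : k < m ^ n)
    {y : ℝ} (hy : y ∈ Icc (0 : ℝ) 1) :
    G ((k + y) / m ^ n) = G (k / m ^ n) + adicIncr G m n k * G y := by
  induction n generalizing k y with
  | zero =>
    obtain rfl : k = 0 := by simpa using hk
    simp [adicIncr, hG.map_zero, hG.map_one]
  | succ n ih =>
    obtain ⟨q, j, hq, hj, rfl⟩ := Nat.exists_eq_mul_add_of_lt_pow_succ hm hk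
    have hφ := fun z (hz : z ∈ Icc (0 : ℝ) 1) => hG.map_succ_adic_add hm hj (fun _ => ih hq) hz
    have h0 := hφ 0 ⟨le_rfl, zero_le_one⟩
    rw [add_zero] at h0
    rw [adicIncr, h0, hφ 1 ⟨zero_le_one, le_rfl⟩, hφ y hy, hG.map_zero, hG.map_one]
    ring

theorem adicIncr_succ (hG : IsSelfAffine m p G) (hm : 0 < m) {n q j : ℕ} (hq : q < m ^ n)
    (hj : j < m) : adicIncr G m (n + 1) (m * q + j) = p j * adicIncr G m n q := by
  have hφ := fun z (hz : z ∈ Icc (0 : ℝ) 1) =>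
    hG.map_succ_adic_add hm hj (fun _ => hG.map_adic_add hm n hq) hz
  have h0 := hφ 0 ⟨le_rfl, zero_le_one⟩
  rw [add_zero] at h0
  rw [adicIncr, h0, hφ 1 ⟨zero_le_one, le_rfl⟩, hG.map_zero, hG.map_one]
  ring

theorem adicIncr_pos (hG : IsSelfAffine m p G) (hm : 0 < m) (hp : ∀ i < m, 0 < p i) (n : ℕ)
    {k : ℕ} (hk : k < m ^ n) : 0 < adicIncr G m n k := by
  induction n generalizing k with
  | zero =>
    obtain rfl : k = 0 := by simpa using hk
    simp [adicIncr, hG.map_zero, hG.map_one]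
  | succ n ih =>
    obtain ⟨q, j, hq, hj, rfl⟩ := Nat.exists_eq_mul_add_of_lt_pow_succ hm hk
    rw [hG.adicIncr_succ hm hq hj]
    exact mul_pos (hp j hj) (ih hq)

theorem map_adic_add_mem_Icc (hG : IsSelfAffine m p G) (hm : 0 < m) (hp : ∀ i < m, 0 < p i)
    (hGI : MapsTo G (Icc 0 1) (Icc 0 1)) {n k : ℕ} (hk : k < m ^ n) {y : ℝ}
    (hy : y ∈ Icc (0 : ℝ) 1) : G ((k + y) / m ^ n) ∈ Icc (G (k / m ^ n)) (G ((k + 1) / m ^ n)) := by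
  have hΔ := hG.adicIncr_pos hm hp n hk
  obtain ⟨h0, h1⟩ := hGI hy
  rw [hG.map_adic_add hm n hk hy]
  unfold adicIncr at hΔ ⊢
  constructor <;> nlinarith

theorem map_adic_lt_map_adic (hG : IsSelfAffine m p G) (hm : 0 < m) (hp : ∀ i < m, 0 < p i)
    {n k l : ℕ} (hkl : k < l) (hl : l ≤ m ^ n) : G (k / m ^ n) < G (l / m ^ n) := by
  induction l, hkl using Nat.le_induction with
  | base => simpa [adicIncr] using hG.adicIncr_pos hm hp n hl
  | succ l hkl ih =>
    have := hG.adicIncr_pos hm hp n hl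
    unfold adicIncr at this
    push_cast
    linarith [ih (by omega)]

theorem strictMonoOn (hG : IsSelfAffine m p G) (hm : 1 < m) (hp : ∀ i < m, 0 < p i)
    (hGI : MapsTo G (Icc 0 1) (Icc 0 1)) : StrictMonoOn G (Icc 0 1) := by
  have hm0 : 0 < m := by omega
  intro s hs t ht hst
  obtain ⟨n, hn⟩ := pow_unbounded_of_one_lt (3 / (t - s)) (by exact_mod_cast hm : (1 : ℝ) < m)
  have hpow : (0 : ℝ) < m ^ n := by positivity
  obtain ⟨k, hk, y, hy, rfl⟩ := exists_eq_adic_add hm0 n hs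
  obtain ⟨l, hl, z, hz, rfl⟩ := exists_eq_adic_add hm0 n ht
  have hkl : k + 1 < l := by
    rw [div_lt_iff₀ (by linarith), ← sub_div, mul_div_cancel₀ _ hpow.ne'] at hn
    have : (k : ℝ) + 1 < l := by linarith [hy.1, hy.2, hz.1, hz.2]
    exact_mod_cast this
  calc G ((k + y) / m ^ n) ≤ G ((k + 1) / m ^ n) :=
        (hG.map_adic_add_mem_Icc hm0 hp hGI hk hy).2
    _ < G (l / m ^ n) := by exact_mod_cast hG.map_adic_lt_map_adic hm0 hp hkl hl.le
    _ ≤ G ((l + z) / m ^ n) := (hG.map_adic_add_mem_Icc hm0 hp hGI hl hz).1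

theorem hasDerivAt_eq_zero (hG : IsSelfAffine m p G) (hm : 1 < m) (hp : ∀ i < m, 0 < p i)
    (hp1 : {i | i < m ∧ m * p i = 1}.Subsingleton) {t c : ℝ} (ht : t ∈ Ico 0 1)
    (htC : t ∉ eventuallyConstDigits m) (hc : HasDerivAt G c t) : c = 0 := by
  have hm0 : 0 < m := by omega
  set k : ℕ → ℕ := fun n => ⌊t * m ^ n⌋₊
  have hk : ∀ n, k n < m ^ n := fun n => (Nat.floor_lt (by have := ht.1; positivity)).2 (by
    push_cast; nlinarith [ht.2, (by positivity : (0 : ℝ) < m ^ n)])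
  choose d hd hkd using exists_natFloor_mul_pow_succ_eq hm0 ht.1
  replace hkd : ∀ n, k (n + 1) = m * k n + d n := hkd
  set R : ℕ → ℝ := fun n => slope G (k n / m ^ n) ((k n + 1) / m ^ n)
  have hR : ∀ n, R n = m ^ n * adicIncr G m n (k n) := fun n => slope_adic G hm0 n (k n)
  have hRpos : ∀ n, 0 < R n := fun n => by
    rw [hR]; exact mul_pos (by positivity) (hG.adicIncr_pos hm0 hp n (hk n))
  have hRsucc : ∀ n, R (n + 1) = m * p (d n) * R n := fun n => by
    rw [hR, hR, hkd, hG.adicIncr_succ hm0 (hk n) (hd n)]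
    ring
  have hRc : Tendsto R atTop (𝓝 c) := hc.tendsto_slope_adic hm ht.1 htC
  by_contra hc0
  have hratio : Tendsto (fun n => m * p (d n)) atTop (𝓝 1) := by
    have := (hRc.comp (tendsto_add_atTop_nat 1)).div hRc hc0
    rw [div_self hc0] at this
    refine this.congr fun n => ?_
    show R (n + 1) / R n = _
    rw [hRsucc, mul_div_cancel_right₀ _ (hRpos n).ne']
  obtain ⟨N, hN⟩ := eventually_atTop.1 (hratio.eventually_eq_of_finite
    ((finite_Iio m).image fun i => m * p i) fun n => ⟨d n, hd n, rfl⟩)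
  have hdN : ∀ n ≥ N, d n = d N := fun n hn => hp1 ⟨hd n, hN n hn⟩ ⟨hd N, hN N le_rfl⟩
  exact htC (mem_eventuallyConstDigits_of_digit_eq hm ht.1 fun n hn => hdN n hn ▸ hkd n)

theorem ae_hasDerivAt_zero (hG : IsSelfAffine m p G) (hm : 1 < m) (hp : ∀ i < m, 0 < p i)
    (hp1 : {i | i < m ∧ m * p i = 1}.Subsingleton) (hGI : MapsTo G (Icc 0 1) (Icc 0 1)) :
    ∀ᵐ t ∂volume.restrict (Ioo (0 : ℝ) 1), HasDerivAt G 0 t := by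
  have hdiff := ae_restrict_of_ae_restrict_of_subset Ioo_subset_Icc_self
    ((hG.strictMonoOn hm hp hGI).monotoneOn.ae_differentiableWithinAt measurableSet_Icc)
  have hC : ∀ᵐ t ∂volume.restrict (Ioo (0 : ℝ) 1), t ∉ eventuallyConstDigits m :=
    ae_restrict_of_ae (measure_eq_zero_iff_ae_notMem.1 ((countable_range _).measure_zero volume))
  filter_upwards [hdiff, hC, ae_restrict_mem measurableSet_Ioo] with t hdt htC ht
  have hd := (hdt.differentiableAt (Icc_mem_nhds ht.1 ht.2)).hasDerivAt
  rwa [hG.hasDerivAt_eq_zero hm hp hp1 (Ioo_subset_Ico_self ht) htC hd] at hd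

end IsSelfAffine

def slopeOW (a b : ℝ) (i : ℕ) : ℝ := if i = 0 then a else if i = 1 then b - a else 1 - b

theorem fOW_eq_add_mul (a b : ℝ) (i : ℕ) (x : ℝ) :
    fOW a b i x = fOW a b i 0 + slopeOW a b i * x := by
  unfold fOW slopeOW; split_ifs <;> ring

theorem deriv_fOW (a b : ℝ) (i : ℕ) (x : ℝ) : deriv (fOW a b i) x = slopeOW a b i := by
  rw [funext (fOW_eq_add_mul a b i)]
  simp

theorem alphaOW_eq (a b : ℝ) (G : ℝ → ℝ) (h : a * (b - a) * (1 - b) ≠ 0) :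
    alphaOW a b G = -Real.logb 3 (a * (b - a) * (1 - b)) / 3 := by
  simp only [mul_ne_zero_iff] at h
  have := integral_Ico_comp_natFloor (m := 3) (by norm_num) fun i => -Real.logb 3 |slopeOW a b i|
  simp only [alphaOW, deriv_fOW, A1, Int.floor_toNat, Nat.cast_ofNat] at this ⊢
  rw [this, Real.logb_mul (mul_ne_zero h.1.1 h.1.2) h.2, Real.logb_mul h.1.1 h.1.2]
  simp [Finset.sum_range_succ, slopeOW, Real.logb_abs]

theorem one_lt_neg_logb_div_three_iff {a b : ℝ} (ha : 0 < a) (hab : a < b) (hb : b < 1) :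
    1 < -Real.logb 3 (a * (b - a) * (1 - b)) / 3 ↔ ¬(a = 1 / 3 ∧ b = 2 / 3) := by
  have hpos : 0 < a * (b - a) * (1 - b) := by
    have := sub_pos.2 hab; have := sub_pos.2 hb; positivity
  rw [lt_div_iff₀ three_pos, one_mul, lt_neg, Real.logb_lt_iff_lt_rpow (by norm_num) hpos]
  have hcube : ((a + (b - a) + (1 - b)) / 3) ^ 3 = (3 : ℝ) ^ (-3 : ℝ) := by norm_num
  constructor
  · rintro h ⟨rfl, rfl⟩
    norm_num at h
  · intro hne
    rw [← hcube]
    refine mul_mul_lt_cube_of_not_eq ha.le (sub_pos.2 hab).le (sub_pos.2 hb).le ?_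
    rintro ⟨h1, h2⟩
    exact hne ⟨by linarith, by linarith⟩

theorem slopeOW_pos {a b : ℝ} (ha : 0 < a) (hab : a < b) (hb : b < 1) (i : ℕ) :
    0 < slopeOW a b i := by
  unfold slopeOW; split_ifs <;> linarith

theorem isSelfAffine_fOW {a b : ℝ} {G : ℝ → ℝ}
    (hGeq : ∀ i : ℕ, i < 3 → ∀ t : ℝ, (i : ℝ) / 3 ≤ t → t ≤ ((i : ℝ) + 1) / 3 →
      G t = fOW a b i (G (3 * t - i)))
    (hG0 : G 0 = 0) (hG1 : G 1 = 1) : IsSelfAffine 3 (slopeOW a b) G where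
  map_zero := hG0
  map_one := hG1
  map_digit_add i hi y hy := by
    have hy' := hGeq i hi ((i + y) / 3) (by linarith [hy.1]) (by linarith [hy.2])
    have h0 := hGeq i hi (i / 3) le_rfl (by linarith)
    rw [Nat.cast_ofNat, hy', h0, show 3 * ((i + y) / 3) - i = y by ring,
      show 3 * ((i : ℝ) / 3) - i = 0 by ring, hG0, fOW_eq_add_mul a b i (G y)]

theorem subsingleton_slopeOW_eq {a b : ℝ} (hne : ¬(a = 1 / 3 ∧ b = 2 / 3)) :
    {i | i < 3 ∧ ((3 : ℕ) : ℝ) * slopeOW a b i = 1}.Subsingleton := by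
  rintro i ⟨hi, hpi⟩ j ⟨hj, hpj⟩
  by_contra hij
  apply hne
  interval_cases i <;> interval_cases j <;> simp [slopeOW] at hpi hpj hij ⊢ <;>
    constructor <;> linarith

theorem okamotoWunsch_singular (a b : ℝ) (ha : 0 < a) (hab : a < b) (hb : b < 1)
    (G : ℝ → ℝ)
    (hGX : Set.MapsTo G (Set.Icc 0 1) (Set.Icc 0 1))
    (hGeq : ∀ i : ℕ, i < 3 → ∀ t : ℝ, (i : ℝ) / 3 ≤ t → t ≤ ((i : ℝ) + 1) / 3 →
      G t = fOW a b i (G (3 * t - i)))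
    (hG0 : G 0 = 0) (hG1 : G 1 = 1) :
    alphaOW a b G = -Real.logb 3 (a * (b - a) * (1 - b)) / 3 ∧
    (1 < alphaOW a b G ↔ ¬(a = 1 / 3 ∧ b = 2 / 3)) ∧
    (¬(a = 1 / 3 ∧ b = 2 / 3) →
      StrictMonoOn G (Set.Icc (0 : ℝ) 1) ∧
      ∀ᵐ t ∂(volume.restrict (Set.Ioo (0 : ℝ) 1)),
        HasDerivWithinAt G 0 (Set.Icc (0 : ℝ) 1) t) := by
  have hα := alphaOW_eq a b G (mul_pos (mul_pos ha (sub_pos.2 hab)) (sub_pos.2 hb)).ne'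
  have hG := isSelfAffine_fOW hGeq hG0 hG1
  have hp : ∀ i < 3, 0 < slopeOW a b i := fun i _ => slopeOW_pos ha hab hb i
  refine ⟨hα, hα ▸ one_lt_neg_logb_div_three_iff ha hab hb, fun hne =>
    ⟨hG.strictMonoOn (by norm_num) hp hGX, ?_⟩⟩
  filter_upwards [hG.ae_hasDerivAt_zero (by norm_num) hp (subsingleton_slopeOW_eq hne) hGX]
    with t ht using ht.hasDerivWithinAt
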